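/- (Rørdam–Tarski Theorem) Let S be a preordered abelian monoid and let x, y ∈ S. Then x <_s y if and only if x ∈ ⟨y⟩ and ν(x) < ν(y) for every state ν on S with ν(y) = 1. -/

import Mathlib

/-!
If `x` lies in the ideal of `y` but is not stably dominated by it, then `b • y + n • x ≤ b' • y`
forces `b + n ≤ b'`. So `b • y ↦ b` is a partial state on the multiples of `y`, and the value `1`
at `x` is compatible with it. A partial state extends to any further element `z` by giving `z` the
largest value compatible with all inequalities `p + n • z ≤ q`: a larger value is refuted by one
such inequality, and adding suitable multiples of it to `p + n • z ≤ q + n' • z` eliminates `z`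
from the right-hand side. Zorn's lemma then yields a state `ν` with `ν y = 1 ≤ ν x`.
-/

open scoped ENNReal

def IsState {S : Type*} [AddCommMonoid S] [Preorder S] (ν : S → ℝ≥0∞) : Prop :=
  ν 0 = 0 ∧ (∀ a b : S, ν (a + b) = ν a + ν b) ∧ ∀ a b : S, a ≤ b → ν a ≤ ν b

section PreorderedMonoid

variable {S : Type*} [AddCommMonoid S] [Preorder S]

def StablyDominated (x y : S) : Prop :=
  ∃ n : ℕ, 1 ≤ n ∧ (n + 1) • x ≤ n • y

theorem IsState.map_nsmul {ν : S → ℝ≥0∞} (hν : IsState ν) (n : ℕ) (a : S) :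
    ν (n • a) = n * ν a := by
  induction n with
  | zero => simpa using hν.1
  | succ k ih => rw [succ_nsmul, hν.2.1, ih]; push_cast; ring

theorem StablyDominated.lt_of_isState {x y : S} (h : StablyDominated x y) {ν : S → ℝ≥0∞}
    (hν : IsState ν) (hνy : ν y = 1) : ν x < ν y := by
  obtain ⟨n, -, hn⟩ := h
  rw [hνy]
  by_contra! hx
  have hνn := hν.2.2 _ _ hn
  rw [hν.map_nsmul, hν.map_nsmul, hνy, mul_one] at hνn
  have : ((n + 1 : ℕ) : ℝ≥0∞) ≤ n := (le_mul_of_one_le_right' hx).trans hνn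
  exact absurd (Nat.cast_le.mp this) (by omega)

/-- A partial state, encoded by its graph; it is single-valued because `≤` is reflexive. -/
def IsPartialState (G : AddSubmonoid (S × ℝ≥0∞)) : Prop :=
  ∀ p ∈ G, ∀ q ∈ G, p.1 ≤ q.1 → p.2 ≤ q.2

noncomputable def extensionValue (G : AddSubmonoid (S × ℝ≥0∞)) (z : S) : ℝ≥0∞ :=
  sSup {γ | ∀ p ∈ G, ∀ q ∈ G, ∀ n : ℕ, p.1 + n • z ≤ q.1 → p.2 + n * γ ≤ q.2}

theorem isPartialState_sSup {c : Set (AddSubmonoid (S × ℝ≥0∞))}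
    (hc : ∀ G ∈ c, IsPartialState G) (hchain : IsChain (· ≤ ·) c) (hne : c.Nonempty) :
    IsPartialState (sSup c) := by
  intro p hp q hq
  rw [AddSubmonoid.mem_sSup_of_directedOn hne hchain.directedOn] at hp hq
  obtain ⟨G, hG, hpG⟩ := hp
  obtain ⟨H, hH, hqH⟩ := hq
  rcases hchain.total hG hH with hGH | hHG
  · exact hc H hH p (hGH hpG) q hqH
  · exact hc G hG p hpG q (hHG hqH)

variable [AddLeftMono S]

theorem add_nsmul_le_add_nsmul_of_add_le_add {a u v : S} (h : a + u ≤ a + v) (k : ℕ) :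
    a + k • u ≤ a + k • v := by
  induction k with
  | zero => simp
  | succ k ih =>
    calc a + (k + 1) • u = (a + u) + k • u := by rw [succ_nsmul']; abel
      _ ≤ (a + v) + k • u := add_le_add_left h _
      _ = (a + k • u) + v := by abel
      _ ≤ (a + k • v) + v := add_le_add_left ih _
      _ = a + (k + 1) • v := by rw [succ_nsmul]; abel

theorem nsmul_add_nsmul_add_mul_nsmul_le {a b a₀ b₀ z : S} {n n' n₀ : ℕ}
    (h : a + n • z ≤ b + n' • z) (h₀ : a₀ + n₀ • z ≤ b₀) :
    n₀ • a + n' • a₀ + (n₀ * n) • z ≤ n₀ • b + n' • b₀ :=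
  calc n₀ • a + n' • a₀ + (n₀ * n) • z = n₀ • (a + n • z) + n' • a₀ := by
        rw [nsmul_add, mul_nsmul']; abel
    _ ≤ n₀ • (b + n' • z) + n' • a₀ := add_le_add_left (nsmul_le_nsmul_right h _) _
    _ = n₀ • b + n' • (a₀ + n₀ • z) := by
        rw [nsmul_add, nsmul_add, ← mul_nsmul', ← mul_nsmul, mul_comm]; abel
    _ ≤ n₀ • b + n' • b₀ := add_le_add_right (nsmul_le_nsmul_right h₀ _) _

theorem StablyDominated.exists_le_nsmul (h0 : ∀ a : S, 0 ≤ a) {x y : S}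
    (h : StablyDominated x y) : ∃ n : ℕ, x ≤ n • y := by
  obtain ⟨n, -, hn⟩ := h
  exact ⟨n, (le_add_of_nonneg_left (h0 _)).trans ((succ_nsmul x n).symm.le.trans hn)⟩

theorem stablyDominated_of_nsmul_le_nsmul (h0 : ∀ a : S, 0 ≤ a) {x y : S} {k l : ℕ}
    (h : k • x ≤ l • y) (hlk : l < k) : StablyDominated x y := by
  rcases Nat.eq_zero_or_pos l with rfl | hl
  · have hx : x ≤ 0 :=
      calc x = 1 • x := (one_nsmul x).symm
        _ ≤ k • x := nsmul_le_nsmul_left (h0 x) hlk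
        _ ≤ 0 := by simpa using h
    refine ⟨1, le_rfl, ?_⟩
    calc (1 + 1) • x = x + x := by rw [add_nsmul, one_nsmul]
      _ ≤ 0 + 0 := add_le_add hx hx
      _ ≤ 1 • y := by simpa using h0 y
  · exact ⟨l, hl, (nsmul_le_nsmul_left (h0 x) hlk).trans h⟩

theorem le_of_nsmul_le_nsmul_of_not_stablyDominated (h0 : ∀ a : S, 0 ≤ a) {x y : S} {m : ℕ}
    (hm : x ≤ m • y) (hxy : ¬ StablyDominated x y) {a b : ℕ} (h : a • y ≤ b • y) : a ≤ b := by
  by_contra! hba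
  obtain ⟨d, rfl⟩ : ∃ d, a = b + (d + 1) := ⟨a - b - 1, by omega⟩
  have hcontract (k : ℕ) : b • y + k • ((d + 1) • y) ≤ b • y := by
    have h' : b • y + (d + 1) • y ≤ b • y + 0 := by rwa [← add_nsmul, add_zero]
    simpa using add_nsmul_le_add_nsmul_of_add_le_add h' k
  refine hxy (stablyDominated_of_nsmul_le_nsmul h0 (k := b + 1) ?_ (Nat.lt_succ_self b))
  set N := (b + 1) * m
  calc (b + 1) • x ≤ (b + 1) • (m • y) := nsmul_le_nsmul_right hm _
    _ = N • y := (mul_nsmul' y _ _).symm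
    _ ≤ (b + N * (d + 1)) • y := nsmul_le_nsmul_left (h0 y) (by nlinarith)
    _ = b • y + N • ((d + 1) • y) := by rw [add_nsmul, mul_nsmul']
    _ ≤ b • y := hcontract N

theorem add_le_of_nsmul_add_nsmul_le_of_not_stablyDominated (h0 : ∀ a : S, 0 ≤ a) {x y : S}
    {m : ℕ} (hm : x ≤ m • y) (hxy : ¬ StablyDominated x y) {b n b' : ℕ}
    (h : b • y + n • x ≤ b' • y) : b + n ≤ b' := by
  obtain ⟨e, rfl⟩ : ∃ e, b' = b + e :=
    Nat.exists_eq_add_of_le (le_of_nsmul_le_nsmul_of_not_stablyDominated h0 hm hxy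
      ((le_add_of_nonneg_right (h0 _)).trans h))
  by_contra! hen
  have hiter := add_nsmul_le_add_nsmul_of_add_le_add (a := b • y) (u := n • x) (v := e • y)
    (by rwa [← add_nsmul]) (b + 1)
  refine hxy (stablyDominated_of_nsmul_le_nsmul h0 (k := (b + 1) * n) (l := b + (b + 1) * e) ?_
    (by nlinarith))
  calc ((b + 1) * n) • x = (b + 1) • (n • x) := mul_nsmul' x _ _
    _ ≤ b • y + (b + 1) • (n • x) := le_add_of_nonneg_left (h0 _)
    _ ≤ b • y + (b + 1) • (e • y) := hiter
    _ = (b + (b + 1) * e) • y := by rw [← mul_nsmul', ← add_nsmul]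

namespace IsPartialState

variable {G : AddSubmonoid (S × ℝ≥0∞)} {p q : S × ℝ≥0∞} {z : S} {n n' : ℕ}

theorem add_mul_extensionValue_le (h0 : ∀ a : S, 0 ≤ a) (hG : IsPartialState G) (hp : p ∈ G)
    (hq : q ∈ G) (h : p.1 + n • z ≤ q.1) : p.2 + n * extensionValue G z ≤ q.2 := by
  have hpq : p.2 ≤ q.2 := hG p hp q hq ((le_add_of_nonneg_right (h0 _)).trans h)
  rcases eq_or_ne p.2 ⊤ with htop | htop
  · simp [htop, top_le_iff.mp (htop ▸ hpq)]
  rw [← ENNReal.le_sub_iff_add_le_left htop hpq, extensionValue, ENNReal.mul_sSup]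
  exact iSup₂_le fun γ hγ => (ENNReal.le_sub_iff_add_le_left htop hpq).2 (hγ p hp q hq n h)

theorem add_mul_extensionValue_le_add_mul_of_lt (h0 : ∀ a : S, 0 ≤ a) (hG : IsPartialState G)
    (hp : p ∈ G) (hq : q ∈ G) (h : p.1 + n • z ≤ q.1 + n' • z) {β : ℝ≥0∞}
    (hβ : extensionValue G z < β) : p.2 + n * extensionValue G z ≤ q.2 + n' * β := by
  set α := extensionValue G z
  obtain ⟨p₀, hp₀, q₀, hq₀, n₀, htrade, hviol⟩ :
      ∃ p₀ ∈ G, ∃ q₀ ∈ G, ∃ n₀ : ℕ, p₀.1 + n₀ • z ≤ q₀.1 ∧ q₀.2 < p₀.2 + n₀ * β := by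
    by_contra! hall
    exact hβ.not_ge (le_sSup hall)
  have hpq₀ : p₀.2 ≤ q₀.2 := hG p₀ hp₀ q₀ hq₀ ((le_add_of_nonneg_right (h0 _)).trans htrade)
  have hn₀ : (n₀ : ℝ≥0∞) ≠ 0 := fun hn₀ => hviol.not_ge (by simpa [hn₀] using hpq₀)
  have hp₀top : p₀.2 ≠ ⊤ := ne_top_of_le_ne_top hviol.ne_top hpq₀
  have hcomb := hG.add_mul_extensionValue_le h0
    (add_mem (nsmul_mem hp n₀) (nsmul_mem hp₀ n')) (add_mem (nsmul_mem hq n₀) (nsmul_mem hq₀ n'))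
    (nsmul_add_nsmul_add_mul_nsmul_le h htrade)
  simp only [Prod.snd_add, Prod.smul_snd, nsmul_eq_mul] at hcomb
  rw [← ENNReal.mul_le_mul_iff_right hn₀ (ENNReal.natCast_ne_top n₀),
    ← ENNReal.add_le_add_iff_right (ENNReal.mul_ne_top (ENNReal.natCast_ne_top n') hp₀top)]
  calc n₀ * (p.2 + n * α) + n' * p₀.2 = n₀ * p.2 + n' * p₀.2 + (n₀ * n : ℕ) * α := by
        push_cast; ring
    _ ≤ n₀ * q.2 + n' * q₀.2 := hcomb
    _ ≤ n₀ * q.2 + n' * (p₀.2 + n₀ * β) := by gcongr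
    _ = n₀ * (q.2 + n' * β) + n' * p₀.2 := by ring

theorem add_mul_extensionValue_le_add_mul (h0 : ∀ a : S, 0 ≤ a) (hG : IsPartialState G)
    (hp : p ∈ G) (hq : q ∈ G) (h : p.1 + n • z ≤ q.1 + n' • z) :
    p.2 + n * extensionValue G z ≤ q.2 + n' * extensionValue G z := by
  set α := extensionValue G z
  rcases Nat.eq_zero_or_pos n' with rfl | hn'
  · simpa using hG.add_mul_extensionValue_le h0 hp hq (by simpa using h)
  rcases eq_or_ne α ⊤ with hα | hα
  · simp [hα, ENNReal.mul_top, hn'.ne']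
  have hn'0 : (n' : ℝ≥0∞) ≠ 0 := by exact_mod_cast hn'.ne'
  refine ENNReal.le_of_forall_pos_le_add fun ε hε _ => ?_
  have hεn' : (ε : ℝ≥0∞) / n' ≠ 0 := by simp [hε.ne']
  calc p.2 + n * α ≤ q.2 + n' * (α + ε / n') :=
        hG.add_mul_extensionValue_le_add_mul_of_lt h0 hp hq h (ENNReal.lt_add_right hα hεn')
    _ = q.2 + n' * α + ε := by
        rw [mul_add, ENNReal.mul_div_cancel hn'0 (ENNReal.natCast_ne_top n'), add_assoc]

theorem sup_closure_singleton (h0 : ∀ a : S, 0 ≤ a) (hG : IsPartialState G) (z : S) :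
    IsPartialState (G ⊔ AddSubmonoid.closure {(z, extensionValue G z)}) := by
  simp only [IsPartialState, AddSubmonoid.mem_sup, AddSubmonoid.mem_closure_singleton]
  rintro _ ⟨p, hp, _, ⟨n, rfl⟩, rfl⟩ _ ⟨q, hq, _, ⟨n', rfl⟩, rfl⟩ h
  simpa [nsmul_eq_mul] using hG.add_mul_extensionValue_le_add_mul h0 hp hq h

theorem exists_isState (h0 : ∀ a : S, 0 ≤ a) (hG : IsPartialState G) : ∃ ν : S → ℝ≥0∞, IsState ν ∧ ∀ p ∈ G, ν p.1 = p.2 := by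
  obtain ⟨M, hGM, hM⟩ := zorn_le_nonempty₀ {H | IsPartialState H}
    (fun c hc hchain H hH => ⟨sSup c, isPartialState_sSup hc hchain ⟨H, hH⟩,
      fun _ hK => le_sSup hK⟩) G hG
  have hMstate : IsPartialState M := hM.prop
  have hunique {z : S} {r r' : ℝ≥0∞} (h : (z, r) ∈ M) (h' : (z, r') ∈ M) : r = r' :=
    le_antisymm (hMstate _ h _ h' le_rfl) (hMstate _ h' _ h le_rfl)
  have htotal (z : S) : ∃ r, (z, r) ∈ M :=
    ⟨extensionValue M z, hM.le_of_ge (hMstate.sup_closure_singleton h0 z) le_sup_left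
      (AddSubmonoid.mem_sup_right (AddSubmonoid.subset_closure rfl))⟩
  choose ν hν using htotal
  refine ⟨ν, ⟨hunique (hν 0) (zero_mem M), fun a b => hunique (hν _) (add_mem (hν a) (hν b)),
    fun a b hab => hMstate _ (hν a) _ (hν b) hab⟩, fun p hp => hunique (hν _) (hGM hp)⟩

end IsPartialState

theorem exists_isState_one_le_of_not_stablyDominated (h0 : ∀ a : S, 0 ≤ a) {x y : S} {m : ℕ}
    (hm : x ≤ m • y) (hxy : ¬ StablyDominated x y) :
    ∃ ν : S → ℝ≥0∞, IsState ν ∧ ν y = 1 ∧ 1 ≤ ν x := by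
  set G := AddSubmonoid.closure {((y, 1) : S × ℝ≥0∞)}
  have hG : IsPartialState G := by
    simp only [IsPartialState, G, AddSubmonoid.mem_closure_singleton]
    rintro _ ⟨a, rfl⟩ _ ⟨b, rfl⟩ h
    simpa using le_of_nsmul_le_nsmul_of_not_stablyDominated h0 hm hxy h
  have hx : 1 ≤ extensionValue G x := by
    refine le_sSup ?_
    simp only [Set.mem_ofPred_eq, G, AddSubmonoid.mem_closure_singleton]
    rintro _ ⟨b, rfl⟩ _ ⟨b', rfl⟩ n h
    simpa using (Nat.cast_le (α := ℝ≥0∞)).2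
      (add_le_of_nsmul_add_nsmul_le_of_not_stablyDominated h0 hm hxy (by simpa using h))
  obtain ⟨ν, hν, hνG⟩ := (hG.sup_closure_singleton h0 x).exists_isState h0
  refine ⟨ν, hν, hνG (y, 1) (AddSubmonoid.mem_sup_left (AddSubmonoid.subset_closure rfl)), ?_⟩
  rwa [hνG _ (AddSubmonoid.mem_sup_right (AddSubmonoid.subset_closure rfl))]

end PreorderedMonoid

/-- The Rørdam–Tarski Theorem: `x <ₛ y` (i.e. `(n+1) • x ≤ n • y` for some `n ≥ 1`)
if and only if `x ∈ ⟨y⟩` and `ν x < ν y` for every state `ν` with `ν y = 1`. -/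
theorem stmt9 {S : Type*} [AddCommMonoid S] [Preorder S]
    (hzero : ∀ x : S, 0 ≤ x)
    (hadd : ∀ x y z : S, x ≤ y → x + z ≤ y + z)
    (x y : S) :
    (∃ n : ℕ, 1 ≤ n ∧ (n + 1) • x ≤ n • y) ↔
      ((∃ n : ℕ, x ≤ n • y) ∧
        ∀ ν : S → ℝ≥0∞, IsState ν → ν y = 1 → ν x < ν y) := by
  have : AddLeftMono S := ⟨fun a b c h => by simpa only [add_comm a] using hadd b c a h⟩
  constructor
  · intro (hxy : StablyDominated x y)
    exact ⟨hxy.exists_le_nsmul hzero, fun ν hν hνy => hxy.lt_of_isState hν hνy⟩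
  · rintro ⟨⟨m, hm⟩, hstate⟩
    by_contra hxy
    obtain ⟨ν, hν, hνy, hνx⟩ := exists_isState_one_le_of_not_stablyDominated hzero hm hxy
    exact (hstate ν hν hνy).not_ge (hνy ▸ hνx)
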